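/- arXiv:1505.05720 — 2 statements merged into one kernel-verified Lean document; each statement's English description precedes it below -/
import Mathlib

section
/- Vanishing of the weighted second-order trace: if u is in the weighted space V²_a (i.e., u ∈ V¹_a and a·u' ∈ H¹(0,1)), with a satisfying the degeneracy assumptions with μ < 2, then lim_{x→0⁺} x·a(x)·u'(x)² = 0. -/
/-!
The function `v x = x * a x * u' x ^ 2` has derivative
`v' = a u'² + 2 x u' (a u')' - x a' u'²` on `(0, 1]`. The condition `x a' ≤ μ a` makes
`a x * x ^ (-μ)` antitone, so `a x ≥ a 1 * x ^ μ ≥ a 1 * x ^ 2` as `μ < 2`; this turns the cross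
term into `|2 x u' (a u')'| ≤ a u'² + (a u')'² / a 1` and shows `v' ∈ L¹`. Hence `v` has a limit
`L` at `0⁺`, and `L ≠ 0` would force `a u'² = v / x ≳ |L| / x`, which is not integrable at `0`.
-/

open MeasureTheory Set Filter Topology

section LimitAtLeftEndpoint

theorem integrableOn_of_hasDerivAt_of_norm_le {E : Type*} [NormedAddCommGroup E]
    [NormedSpace ℝ E] [CompleteSpace E] {f f' : ℝ → E} {g : ℝ → ℝ} {s : Set ℝ}
    (hs : MeasurableSet s) (hf : ∀ x ∈ s, HasDerivAt f (f' x) x) (hg : IntegrableOn g s)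
    (hle : ∀ x ∈ s, ‖f' x‖ ≤ g x) : IntegrableOn f' s := by
  have hmeas : AEStronglyMeasurable f' (volume.restrict s) :=
    (aestronglyMeasurable_deriv f _).congr <|
      (ae_restrict_iff' hs).2 (ae_of_all _ fun x hx => (hf x hx).deriv)
  exact hg.mono' hmeas ((ae_restrict_iff' hs).2 (ae_of_all _ hle))

theorem tendsto_nhdsGT_of_hasDerivAt_of_integrableOn {E : Type*} [NormedAddCommGroup E]
    [NormedSpace ℝ E] [CompleteSpace E] {f f' : ℝ → E} {a b : ℝ} (hab : a < b)
    (hf : ∀ x ∈ Ioc a b, HasDerivAt f (f' x) x) (hf' : IntegrableOn f' (Ioo a b)) :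
    Tendsto f (𝓝[>] a) (𝓝 (f b - ∫ t in a..b, f' t)) := by
  have hftc : ∀ x ∈ Ioc a b, f x = f b - ∫ t in x..b, f' t := fun x hx => by
    have hint : IntervalIntegrable f' volume x b :=
      (intervalIntegrable_iff_integrableOn_Ioo_of_le hx.2).2 <|
        hf'.mono_set (Ioo_subset_Ioo_left hx.1.le)
    rw [intervalIntegral.integral_eq_sub_of_hasDerivAt (fun t ht => hf t ?_) hint]
    · abel
    · rw [uIcc_of_le hx.2] at ht
      exact ⟨hx.1.trans_le ht.1, ht.2⟩
  have hprim : ContinuousWithinAt (fun x => ∫ t in x..b, f' t) (Icc a b) a := by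
    have hint : IntegrableOn f' (uIcc a b) := by
      rwa [uIcc_of_le hab.le, integrableOn_Icc_iff_integrableOn_Ioo]
    have := intervalIntegral.continuousOn_primitive_interval_left hint a left_mem_uIcc
    rwa [uIcc_of_le hab.le] at this
  have hlim : Tendsto (fun x => f b - ∫ t in x..b, f' t) (𝓝[>] a)
      (𝓝 (f b - ∫ t in a..b, f' t)) := by
    refine tendsto_const_nhds.sub (hprim.tendsto.mono_left ?_)
    rw [← nhdsWithin_Ioc_eq_nhdsGT hab]
    exact nhdsWithin_mono a Ioc_subset_Icc_self
  refine hlim.congr' ?_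
  filter_upwards [Ioc_mem_nhdsGT hab] with x hx using (hftc x hx).symm

/-- Since `x⁻¹` is not integrable at `0⁺`, neither is `g` when `x * g x` has a nonzero limit. -/
theorem eq_zero_of_tendsto_mul_of_integrableOn {g : ℝ → ℝ} {b L : ℝ} (hb : 0 < b)
    (hg : IntegrableOn g (Ioo 0 b))
    (hL : Tendsto (fun x => x * g x) (𝓝[>] 0) (𝓝 L)) : L = 0 := by
  by_contra hL0
  have hpos : 0 < |L| := abs_pos.2 hL0
  have hev : ∀ᶠ x in 𝓝[>] (0 : ℝ), x < b ∧ |L| / 2 < |x * g x| := by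
    filter_upwards [Ioo_mem_nhdsGT hb,
      ((continuous_abs.tendsto L).comp hL).eventually (eventually_gt_nhds (half_lt_self hpos))]
      with x hxb hx using ⟨hxb.2, hx⟩
  obtain ⟨ε, hε, hsub⟩ := mem_nhdsGT_iff_exists_Ioc_subset.1 hev
  have hgε : IntegrableOn g (Ioo 0 ε) :=
    hg.mono_set fun x hx => ⟨hx.1, (hsub ⟨hx.1, hx.2.le⟩).1⟩
  have hinv : IntegrableOn (fun x : ℝ => x⁻¹) (Ioo 0 ε) := by
    refine (hgε.norm.const_mul (2 / |L|)).mono' measurable_inv.aestronglyMeasurable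
      ((ae_restrict_iff' measurableSet_Ioo).2 (ae_of_all _ fun x hx => ?_))
    obtain ⟨-, hgx⟩ := hsub ⟨hx.1, hx.2.le⟩
    rw [abs_mul, abs_of_pos hx.1] at hgx
    rw [norm_inv, Real.norm_of_nonneg hx.1.le, Real.norm_eq_abs, inv_le_iff_one_le_mul₀ hx.1,
      mul_assoc, div_mul_eq_mul_div, one_le_div hpos]
    linarith
  have := (intervalIntegrable_iff_integrableOn_Ioo_of_le hε.le).2 hinv
  rw [intervalIntegrable_inv_iff] at this
  rcases this with h | h
  · exact hε.ne h
  · exact h left_mem_uIcc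

end LimitAtLeftEndpoint

section Weight

variable {a ad : ℝ → ℝ} {μ : ℝ}

theorem antitoneOn_mul_rpow_neg {D : Set ℝ} (hD : Convex ℝ D) (hD0 : D ⊆ Ioi 0)
    (hderiv : ∀ x ∈ D, HasDerivAt a (ad x) x) (hμ : ∀ x ∈ D, x * ad x ≤ μ * a x) :
    AntitoneOn (fun x => a x * x ^ (-μ)) D := by
  have hd : ∀ x ∈ D, HasDerivAt (fun x => a x * x ^ (-μ))
      ((x * ad x - μ * a x) * x ^ (-μ - 1)) x := fun x hx => by
    have hx0 : 0 < x := hD0 hx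
    refine ((hderiv x hx).mul (Real.hasDerivAt_rpow_const (Or.inl hx0.ne'))).congr_deriv ?_
    rw [Real.rpow_sub_one hx0.ne']
    field_simp
    ring
  refine antitoneOn_of_deriv_nonpos hD (fun x hx => (hd x hx).continuousAt.continuousWithinAt)
    (fun x hx => (hd x (interior_subset hx)).differentiableAt.differentiableWithinAt)
    fun x hx => ?_
  have hx := interior_subset hx
  rw [(hd x hx).deriv]
  exact mul_nonpos_of_nonpos_of_nonneg (by linarith [hμ x hx])
    (Real.rpow_pos_of_pos (hD0 hx) _).le

theorem mul_sq_le_of_antitoneOn_mul_rpow_neg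
    (hanti : AntitoneOn (fun x => a x * x ^ (-μ)) (Ioc 0 1)) (hμ2 : μ ≤ 2) (ha1 : 0 ≤ a 1)
    {x : ℝ} (hx : x ∈ Ioc 0 1) : a 1 * x ^ 2 ≤ a x := by
  have h1 : a 1 ≤ a x * x ^ (-μ) := by
    simpa using hanti hx ⟨one_pos, le_rfl⟩ hx.2
  have hxμ : 0 < x ^ μ := Real.rpow_pos_of_pos hx.1 μ
  have h2 : x ^ (2 : ℝ) ≤ x ^ μ := Real.rpow_le_rpow_of_exponent_ge hx.1 hx.2 hμ2
  rw [Real.rpow_two] at h2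
  calc a 1 * x ^ 2 ≤ a 1 * x ^ μ := by gcongr
    _ ≤ a x * x ^ (-μ) * x ^ μ := by gcongr
    _ = a x := by rw [Real.rpow_neg hx.1.le, mul_assoc, inv_mul_cancel₀ hxμ.ne', mul_one]

end Weight

theorem abs_mul_sq_add_sub_le {t A A' c p q μ : ℝ} (ht : 0 < t) (hc : 0 < c)
    (hA : c * t ^ 2 ≤ A) (hA' : t * |A'| ≤ μ * A) :
    |A * p ^ 2 + 2 * t * p * q - t * A' * p ^ 2| ≤ (2 + μ) * (A * p ^ 2) + c⁻¹ * q ^ 2 := by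
  have hA0 : 0 < A := lt_of_lt_of_le (by positivity) hA
  have hcross : |2 * t * p * q| ≤ A * p ^ 2 + c⁻¹ * q ^ 2 := by
    have ht2 : t ^ 2 ≤ A * c⁻¹ := by rw [le_mul_inv_iff₀ hc]; linarith
    have hamgm : |2 * t * p * q| * A ≤ A * p ^ 2 * A + t ^ 2 * q ^ 2 := by
      rcases abs_cases (2 * t * p * q) with ⟨h, -⟩ | ⟨h, -⟩ <;> rw [h] <;>
        nlinarith [sq_nonneg (A * p - t * q), sq_nonneg (A * p + t * q)]
    have hq : t ^ 2 * q ^ 2 ≤ c⁻¹ * q ^ 2 * A := by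
      nlinarith [mul_le_mul_of_nonneg_right ht2 (sq_nonneg q)]
    exact le_of_mul_le_mul_right (by linarith) hA0
  have hlast : |t * A' * p ^ 2| ≤ μ * (A * p ^ 2) := by
    rw [abs_mul, abs_mul, abs_of_pos ht, abs_of_nonneg (sq_nonneg p), ← mul_assoc]
    exact mul_le_mul_of_nonneg_right hA' (sq_nonneg p)
  calc _ ≤ |A * p ^ 2| + |2 * t * p * q| + |t * A' * p ^ 2| :=
        (abs_sub _ _).trans (by gcongr; exact abs_add_le _ _)
    _ ≤ _ := by rw [abs_of_nonneg (by positivity)]; linarith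

theorem hasDerivAt_mul_mul_sq {a ud : ℝ → ℝ} {x A' W : ℝ} (ha : HasDerivAt a A' x)
    (hw : HasDerivAt (fun y => a y * ud y) W x) (hax : a x ≠ 0) :
    HasDerivAt (fun y => y * a y * ud y ^ 2)
      (a x * ud x ^ 2 + 2 * x * ud x * W - x * A' * ud x ^ 2) x := by
  have heq : (fun y => y * (a y * ud y) ^ 2 / a y) =ᶠ[𝓝 x] fun y => y * a y * ud y ^ 2 := by
    filter_upwards [ha.continuousAt.eventually_ne hax] with y hy
    rw [div_eq_iff hy]
    ring
  refine (((hasDerivAt_id' (x := x)).fun_mul (hw.fun_pow 2)).div ha hax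
    |>.congr_of_eventuallyEq heq.symm).congr_deriv ?_
  field_simp
  ring

theorem second_order_weighted_trace_vanishes_general
    (a ad : ℝ → ℝ) (μ : ℝ)
    (hderiv : ∀ x ∈ Set.Ioc (0:ℝ) 1, HasDerivAt a (ad x) x)
    (hpos : ∀ x ∈ Set.Ioc (0:ℝ) 1, 0 < a x)
    (hμ2 : μ < 2)
    (hμ : ∀ x ∈ Set.Ioc (0:ℝ) 1, x * |ad x| ≤ μ * a x)
    (ud w : ℝ → ℝ)
    (hud2 : MeasureTheory.IntegrableOn (fun x => a x * (ud x) ^ 2) (Set.Ioo 0 1))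
    (hwderiv : ∀ x ∈ Set.Ioc (0:ℝ) 1, HasDerivAt (fun y => a y * ud y) (w x) x)
    (hw2 : MeasureTheory.IntegrableOn (fun x => (w x) ^ 2) (Set.Ioo 0 1)) :
    Filter.Tendsto (fun x => x * a x * (ud x) ^ 2) (nhdsWithin 0 (Set.Ioi 0)) (nhds 0) := by
  have ha1 : 0 < a 1 := hpos 1 ⟨one_pos, le_rfl⟩
  have hanti := antitoneOn_mul_rpow_neg (convex_Ioc 0 1) (fun x hx => hx.1) hderiv
    fun x hx => (le_abs_self _).trans <| by rw [abs_mul, abs_of_pos hx.1]; exact hμ x hx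
  have hv := fun x hx => hasDerivAt_mul_mul_sq (hderiv x hx) (hwderiv x hx) (hpos x hx).ne'
  have hv' := integrableOn_of_hasDerivAt_of_norm_le measurableSet_Ioo
    (fun x hx => hv x (Ioo_subset_Ioc_self hx))
    ((hud2.const_mul (2 + μ)).add (hw2.const_mul (a 1)⁻¹)) fun x hx =>
      abs_mul_sq_add_sub_le hx.1 ha1
        (mul_sq_le_of_antitoneOn_mul_rpow_neg hanti hμ2.le ha1.le (Ioo_subset_Ioc_self hx))
        (hμ x (Ioo_subset_Ioc_self hx))
  have hlim := tendsto_nhdsGT_of_hasDerivAt_of_integrableOn one_pos hv hv'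
  rwa [eq_zero_of_tendsto_mul_of_integrableOn one_pos hud2
    (hlim.congr fun x => mul_assoc _ _ _)] at hlim

theorem second_order_weighted_trace_vanishes
    (a ad : ℝ → ℝ) (μ : ℝ)
    (hcont : ContinuousOn a (Set.Icc 0 1))
    (hderiv : ∀ x ∈ Set.Ioc (0:ℝ) 1, HasDerivAt a (ad x) x)
    (hpos : ∀ x ∈ Set.Ioc (0:ℝ) 1, 0 < a x)
    (ha0 : a 0 = 0)
    (hμ0 : 0 ≤ μ) (hμ2 : μ < 2)
    (hμ : ∀ x ∈ Set.Ioc (0:ℝ) 1, x * |ad x| ≤ μ * a x)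
    (u ud w : ℝ → ℝ)
    (hu2 : MeasureTheory.IntegrableOn (fun x => (u x) ^ 2) (Set.Ioo 0 1))
    (huderiv : ∀ x ∈ Set.Ioc (0:ℝ) 1, HasDerivAt u (ud x) x)
    (hud2 : MeasureTheory.IntegrableOn (fun x => a x * (ud x) ^ 2) (Set.Ioo 0 1))
    (hau2 : MeasureTheory.IntegrableOn (fun x => (a x * ud x) ^ 2) (Set.Ioo 0 1))
    (hwderiv : ∀ x ∈ Set.Ioc (0:ℝ) 1, HasDerivAt (fun y => a y * ud y) (w x) x)
    (hw2 : MeasureTheory.IntegrableOn (fun x => (w x) ^ 2) (Set.Ioo 0 1)) :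
    Filter.Tendsto (fun x => x * a x * (ud x) ^ 2) (nhdsWithin 0 (Set.Ioi 0)) (nhds 0) :=
  second_order_weighted_trace_vanishes_general a ad μ hderiv hpos hμ2 hμ ud w hud2 hwderiv hw2
end

section
/- Poincaré inequality without boundary condition at x=1: under the degeneracy assumptions with μ < 2, every u in the weighted space W¹_a (locally absolutely continuous with √a u' ∈ L², no vanishing at 1) satisfies ‖u‖²_{L²(0,1)} ≤ 2 u(1)² + C'_a ∫₀¹ a|u'|² dx, where C'_a = (1/a(1)) min{4, 2/(2-μ)}. -/
/-!
Since `x a' ≤ μ a`, the function `a x * x ^ (-μ)` is antitone, so `a s ≥ a 1 * s ^ μ` on `(0, 1]`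
and it suffices to bound `∫ₓ¹ u²` by `2 u(1)² + min 4 (2 / (2 - μ)) * ∫ₓ¹ s ^ μ u'²`, then let
`x → 0`. The constant `4` comes from `∫ₓ¹ (s u' + u / 2)² ≥ 0`, whose cross term integrates
`(s u²)' = u² + 2 s u u'`, together with `s² ≤ s ^ μ`. The constant `2 / (2 - μ)` comes from
`u² ≤ 2 (u - u(1))² + 2 u(1)²` and Cauchy–Schwarz,
`(u(t) - u(1))² ≤ ∫ₜ¹ s ^ (-μ) · ∫ₜ¹ s ^ μ u'²`, where
`∫ₓ¹ ∫ₜ¹ s ^ (-μ) ds dt = ∫ₓ¹ (s - x) s ^ (-μ) ds ≤ 1 / (2 - μ)`.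
-/

open MeasureTheory Set

theorem sq_integral_mul_le {α : Type*} [MeasurableSpace α] {ν : Measure α} {f g : α → ℝ}
    (hf : MemLp f 2 ν) (hg : MemLp g 2 ν) :
    (∫ x, f x * g x ∂ν) ^ 2 ≤ (∫ x, f x ^ 2 ∂ν) * ∫ x, g x ^ 2 ∂ν := by
  have inner_eq {f g : α → ℝ} (hf : MemLp f 2 ν) (hg : MemLp g 2 ν) :
      inner ℝ (hf.toLp f) (hg.toLp g) = ∫ x, f x * g x ∂ν := by
    rw [L2.inner_def]
    refine integral_congr_ae ?_
    filter_upwards [hf.coeFn_toLp, hg.coeFn_toLp] with x hfx hgx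
    simp [hfx, hgx, mul_comm]
  have h := real_inner_mul_inner_self_le (hf.toLp f) (hg.toLp g)
  rw [inner_eq hf hg, inner_eq hf hf, inner_eq hg hg] at h
  simpa only [sq] using h

theorem aestronglyMeasurable_of_forall_hasDerivAt {u u' : ℝ → ℝ} {s : Set ℝ}
    (hs : MeasurableSet s) (hu : ∀ x ∈ s, HasDerivAt u (u' x) x) :
    AEStronglyMeasurable u' (volume.restrict s) :=
  (measurable_deriv u).aestronglyMeasurable.congr <|
    (ae_restrict_iff' hs).2 <| ae_of_all _ fun x hx => (hu x hx).deriv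

theorem sq_sub_le_integral_inv_mul_integral_mul_sq {u u' w : ℝ → ℝ} {t b : ℝ} (htb : t ≤ b)
    (hu : ∀ s ∈ Icc t b, HasDerivAt u (u' s) s) (hw : ContinuousOn w (Icc t b))
    (hw0 : ∀ s ∈ Icc t b, 0 < w s)
    (hwu' : IntervalIntegrable (fun s => w s * u' s ^ 2) volume t b) :
    (u b - u t) ^ 2 ≤ (∫ s in t..b, (w s)⁻¹) * ∫ s in t..b, w s * u' s ^ 2 := by
  have hIoc : Ioc t b ⊆ Icc t b := Ioc_subset_Icc_self
  have hsqrt : ContinuousOn (fun s => √(w s)) (Ioc t b) := (hw.mono hIoc).sqrt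
  have hsqrt0 : ∀ s ∈ Ioc t b, √(w s) ≠ 0 := fun s hs => (Real.sqrt_pos.2 (hw0 s (hIoc hs))).ne'
  have hsq : ∀ s ∈ Ioc t b, √(w s) ^ 2 = w s := fun s hs => Real.sq_sqrt (hw0 s (hIoc hs)).le
  have hf_sq : EqOn (fun s => (√(w s))⁻¹ ^ 2) (fun s => (w s)⁻¹) (Ioc t b) := fun s hs => by
    simp only [inv_pow, hsq s hs]
  have hg_sq : EqOn (fun s => (√(w s) * u' s) ^ 2) (fun s => w s * u' s ^ 2) (Ioc t b) :=
    fun s hs => by simp only [mul_pow, hsq s hs]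
  have hfg : EqOn (fun s => (√(w s))⁻¹ * (√(w s) * u' s)) u' (Ioc t b) := fun s hs => by
    simp only [inv_mul_cancel_left₀ (hsqrt0 s hs)]
  have hf : MemLp (fun s => (√(w s))⁻¹) 2 (volume.restrict (Ioc t b)) := by
    refine (memLp_two_iff_integrable_sq ?_).2 ?_
    · exact (hsqrt.inv₀ hsqrt0).aestronglyMeasurable measurableSet_Ioc
    · refine IntegrableOn.congr_fun ?_ hf_sq.symm measurableSet_Ioc
      exact ((hw.inv₀ fun s hs => (hw0 s hs).ne').integrableOn_Icc).mono_set hIoc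
  have hg : MemLp (fun s => √(w s) * u' s) 2 (volume.restrict (Ioc t b)) := by
    refine (memLp_two_iff_integrable_sq ?_).2 ?_
    · exact (hsqrt.aestronglyMeasurable measurableSet_Ioc).mul
        (aestronglyMeasurable_of_forall_hasDerivAt measurableSet_Ioc fun s hs => hu s (hIoc hs))
    · exact IntegrableOn.congr_fun hwu'.1 hg_sq.symm measurableSet_Ioc
  have hu' : IntervalIntegrable u' volume t b :=
    (intervalIntegrable_iff_integrableOn_Ioc_of_le htb).2 <|
      IntegrableOn.congr_fun (hf.integrable_mul hg) hfg measurableSet_Ioc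
  have hftc : ∫ s in t..b, u' s = u b - u t :=
    intervalIntegral.integral_eq_sub_of_hasDerivAt
      (fun s hs => hu s (by rwa [uIcc_of_le htb] at hs)) hu'
  have key := sq_integral_mul_le hf hg
  rw [setIntegral_congr_fun measurableSet_Ioc hfg, setIntegral_congr_fun measurableSet_Ioc hf_sq,
    setIntegral_congr_fun measurableSet_Ioc hg_sq] at key
  simpa only [intervalIntegral.integral_of_le htb, ← hftc] using key

theorem integral_integral_eq_integral_sub_mul {f : ℝ → ℝ} {x b : ℝ} (hxb : x ≤ b)
    (hf : ContinuousOn f (Icc x b)) :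
    ∫ t in x..b, ∫ s in t..b, f s = ∫ s in x..b, (s - x) * f s := by
  have hfi : IntegrableOn f (uIcc x b) := by
    rw [uIcc_of_le hxb]; exact hf.integrableOn_Icc
  have hderiv : ∀ t ∈ Ioo (min x b) (max x b),
      HasDerivAt (fun t => ∫ s in t..b, f s) (-f t) t := by
    intro t ht
    rw [min_eq_left hxb, max_eq_right hxb] at ht
    exact intervalIntegral.integral_hasDerivAt_left
      (hfi.intervalIntegrable.mono_set (uIcc_subset_uIcc_right (by
        rw [uIcc_of_le hxb]; exact Ioo_subset_Icc_self ht)))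
      ((hf.mono Ioo_subset_Icc_self).stronglyMeasurableAtFilter isOpen_Ioo t ht)
      (hf.continuousAt (Icc_mem_nhds ht.1 ht.2))
  have hparts := intervalIntegral.integral_mul_deriv_eq_deriv_mul_of_hasDerivAt
    (v := fun t => t - x) (intervalIntegral.continuousOn_primitive_interval_left hfi)
    (by fun_prop) hderiv (fun t _ => (hasDerivAt_id' t).sub_const x)
    hfi.intervalIntegrable.neg intervalIntegrable_const
  simp only [mul_one, intervalIntegral.integral_same, zero_mul, sub_self, mul_zero,
    neg_mul, intervalIntegral.integral_neg, sub_neg_eq_add, zero_add] at hparts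
  rw [hparts]
  exact intervalIntegral.integral_congr fun s _ => mul_comm _ _

theorem integral_integral_inv_rpow_le {x μ : ℝ} (hx : 0 < x) (hx1 : x ≤ 1) (hμ : μ < 2) :
    ∫ t in x..1, ∫ s in t..1, (s ^ μ)⁻¹ ≤ 1 / (2 - μ) := by
  have hpos : ∀ s ∈ Icc x 1, 0 < s := fun s hs => hx.trans_le hs.1
  have hcont (ν : ℝ) : ContinuousOn (fun s : ℝ => s ^ ν) (Icc x 1) :=
    continuousOn_id.rpow_const fun s hs => Or.inl (hpos s hs).ne'
  have hinv : ContinuousOn (fun s : ℝ => (s ^ μ)⁻¹) (Icc x 1) :=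
    (hcont μ).inv₀ fun s hs => (Real.rpow_pos_of_pos (hpos s hs) μ).ne'
  rw [integral_integral_eq_integral_sub_mul hx1 hinv]
  calc ∫ s in x..1, (s - x) * (s ^ μ)⁻¹ ≤ ∫ s in x..1, s ^ (1 - μ) := by
        refine intervalIntegral.integral_mono_on hx1 ?_ ?_ fun s hs => ?_
        · exact ((continuousOn_id.sub continuousOn_const).mul hinv).intervalIntegrable_of_Icc hx1
        · exact (hcont _).intervalIntegrable_of_Icc hx1
        rw [Real.rpow_sub (hpos s hs), Real.rpow_one, div_eq_mul_inv]
        have := Real.rpow_pos_of_pos (hpos s hs) μ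
        gcongr
        linarith
    _ = (1 - x ^ (2 - μ)) / (2 - μ) := by
        rw [integral_rpow (Or.inl (by linarith)), Real.one_rpow, show 1 - μ + 1 = 2 - μ by ring]
    _ ≤ 1 / (2 - μ) :=
        div_le_div_of_nonneg_right (by linarith [Real.rpow_nonneg hx.le (2 - μ)]) (by linarith)

theorem integral_sq_sub_le_of_rpow_weight {u u' : ℝ → ℝ} {x μ : ℝ} (hx : 0 < x) (hx1 : x ≤ 1)
    (hμ : μ < 2) (hu : ∀ s ∈ Icc x 1, HasDerivAt u (u' s) s)
    (hw : IntervalIntegrable (fun s => s ^ μ * u' s ^ 2) volume x 1) :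
    ∫ t in x..1, (u t - u 1) ^ 2 ≤ 1 / (2 - μ) * ∫ s in x..1, s ^ μ * u' s ^ 2 := by
  set K := ∫ s in x..1, s ^ μ * u' s ^ 2
  have hpos : ∀ s ∈ Icc x 1, 0 < s := fun s hs => hx.trans_le hs.1
  have hucont : ContinuousOn u (Icc x 1) := HasDerivAt.continuousOn hu
  have hwcont : ContinuousOn (fun s : ℝ => s ^ μ) (Icc x 1) :=
    continuousOn_id.rpow_const fun s hs => Or.inl (hpos s hs).ne'
  have hinv : ContinuousOn (fun s : ℝ => (s ^ μ)⁻¹) (Icc x 1) :=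
    hwcont.inv₀ fun s hs => (Real.rpow_pos_of_pos (hpos s hs) μ).ne'
  have hK : 0 ≤ K := intervalIntegral.integral_nonneg hx1 fun s hs =>
    mul_nonneg (Real.rpow_nonneg (hpos s hs).le μ) (sq_nonneg _)
  have hpoint : ∀ t ∈ Icc x 1, (u t - u 1) ^ 2 ≤ (∫ s in t..1, (s ^ μ)⁻¹) * K := by
    intro t ht
    have hsub : Icc t 1 ⊆ Icc x 1 := Icc_subset_Icc_left ht.1
    calc (u t - u 1) ^ 2 = (u 1 - u t) ^ 2 := by ring
      _ ≤ (∫ s in t..1, (s ^ μ)⁻¹) * ∫ s in t..1, s ^ μ * u' s ^ 2 :=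
        sq_sub_le_integral_inv_mul_integral_mul_sq ht.2 (fun s hs => hu s (hsub hs))
          (hwcont.mono hsub) (fun s hs => Real.rpow_pos_of_pos (hpos s (hsub hs)) μ)
          (hw.mono_set (by simp only [uIcc_of_le ht.2, uIcc_of_le hx1]; exact hsub))
      _ ≤ (∫ s in t..1, (s ^ μ)⁻¹) * K := by
        gcongr
        · exact intervalIntegral.integral_nonneg ht.2 fun s hs =>
            inv_nonneg.2 (Real.rpow_nonneg (hpos s (hsub hs)).le μ)
        · refine intervalIntegral.integral_mono_interval ht.1 ht.2 le_rfl ?_ hw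
          exact (ae_restrict_iff' measurableSet_Ioc).2 <| ae_of_all _ fun s hs =>
            mul_nonneg (Real.rpow_nonneg (hx.trans hs.1).le μ) (sq_nonneg _)
  have hG : ContinuousOn (fun t => ∫ s in t..1, (s ^ μ)⁻¹) (Icc x 1) := by
    have := intervalIntegral.continuousOn_primitive_interval_left (μ := volume)
      (f := fun s : ℝ => (s ^ μ)⁻¹) (a := x) (b := 1)
      (by rw [uIcc_of_le hx1]; exact hinv.integrableOn_Icc)
    rwa [uIcc_of_le hx1] at this
  calc ∫ t in x..1, (u t - u 1) ^ 2 ≤ ∫ t in x..1, (∫ s in t..1, (s ^ μ)⁻¹) * K := by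
        refine intervalIntegral.integral_mono_on hx1 ?_ ?_ hpoint
        · exact ((hucont.sub continuousOn_const).pow 2).intervalIntegrable_of_Icc hx1
        · exact (hG.mul continuousOn_const).intervalIntegrable_of_Icc hx1
    _ = (∫ t in x..1, ∫ s in t..1, (s ^ μ)⁻¹) * K := intervalIntegral.integral_mul_const _ _
    _ ≤ 1 / (2 - μ) * K := by
        gcongr
        exact integral_integral_inv_rpow_le hx hx1 hμ

theorem integral_sq_le_of_hardy {u u' : ℝ → ℝ} {x b : ℝ} (hx : 0 ≤ x) (hxb : x ≤ b)
    (hu : ∀ s ∈ Icc x b, HasDerivAt u (u' s) s)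
    (hsu' : IntervalIntegrable (fun s => (s * u' s) ^ 2) volume x b) :
    ∫ s in x..b, u s ^ 2 ≤ 2 * b * u b ^ 2 + 4 * ∫ s in x..b, (s * u' s) ^ 2 := by
  have hIcc : uIcc x b = Icc x b := uIcc_of_le hxb
  have hucont : ContinuousOn u (uIcc x b) := hIcc ▸ HasDerivAt.continuousOn hu
  have hsu'_int : IntervalIntegrable (fun s => s * u' s) volume x b := by
    have hm : AEStronglyMeasurable (fun s => s * u' s) (volume.restrict (Ioc x b)) :=
      continuous_id.aestronglyMeasurable.mul <| aestronglyMeasurable_of_forall_hasDerivAt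
        measurableSet_Ioc fun s hs => hu s (Ioc_subset_Icc_self hs)
    exact (intervalIntegrable_iff_integrableOn_Ioc_of_le hxb).2 <|
      ((memLp_two_iff_integrable_sq hm).2 hsu'.1).integrable one_le_two
  have hderiv : ∀ s ∈ uIcc x b,
      HasDerivAt (fun s => s * u s ^ 2) (u s ^ 2 + 2 * u s * (s * u' s)) s := by
    intro s hs
    refine ((hasDerivAt_id' s).fun_mul ((hu s (hIcc ▸ hs)).fun_pow 2)).congr_deriv ?_
    push_cast
    ring
  have hD_int : IntervalIntegrable (fun s => u s ^ 2 + 2 * u s * (s * u' s)) volume x b :=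
    (hucont.pow 2).intervalIntegrable.add
      (hsu'_int.continuousOn_mul (continuousOn_const.mul hucont))
  have hftc := intervalIntegral.integral_eq_sub_of_hasDerivAt hderiv hD_int
  -- `(s u' + u / 2)² ≥ 0`, the cross term `s u u'` being half of `(s u²)'`
  have hmono : ∫ s in x..b, u s ^ 2 / 4
      ≤ ∫ s in x..b, ((s * u' s) ^ 2 + (u s ^ 2 + 2 * u s * (s * u' s)) / 2) :=
    intervalIntegral.integral_mono_on hxb ((hucont.pow 2).intervalIntegrable.div_const _)
      (hsu'.add (hD_int.div_const _))
      fun s _ => by nlinarith [sq_nonneg (s * u' s + u s / 2)]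
  rw [intervalIntegral.integral_div, intervalIntegral.integral_add hsu' (hD_int.div_const _),
    intervalIntegral.integral_div, hftc] at hmono
  nlinarith [mul_nonneg hx (sq_nonneg (u x))]

theorem integral_sq_le_of_rpow_weight {u u' : ℝ → ℝ} {x μ : ℝ} (hx : 0 < x) (hx1 : x ≤ 1)
    (hμ : μ < 2) (hu : ∀ s ∈ Icc x 1, HasDerivAt u (u' s) s)
    (hw : IntervalIntegrable (fun s => s ^ μ * u' s ^ 2) volume x 1) :
    ∫ s in x..1, u s ^ 2 ≤ 2 * u 1 ^ 2 + min 4 (2 / (2 - μ)) * ∫ s in x..1, s ^ μ * u' s ^ 2 := by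
  set K := ∫ s in x..1, s ^ μ * u' s ^ 2
  have hK : 0 ≤ K := intervalIntegral.integral_nonneg hx1 fun s hs =>
    mul_nonneg (Real.rpow_nonneg (hx.trans_le hs.1).le μ) (sq_nonneg _)
  have hucont : ContinuousOn u (Icc x 1) := HasDerivAt.continuousOn hu
  have hsq_le : ∀ s ∈ Icc x 1, (s * u' s) ^ 2 ≤ s ^ μ * u' s ^ 2 := by
    intro s hs
    have h2 : s ^ (2 : ℝ) ≤ s ^ μ :=
      Real.rpow_le_rpow_of_exponent_ge (hx.trans_le hs.1) hs.2 hμ.le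
    rw [Real.rpow_two] at h2
    rw [mul_pow]
    exact mul_le_mul_of_nonneg_right h2 (sq_nonneg _)
  have hsu' : IntervalIntegrable (fun s => (s * u' s) ^ 2) volume x 1 := by
    refine (intervalIntegrable_iff_integrableOn_Ioc_of_le hx1).2 <| hw.1.mono' ?_ <|
      (ae_restrict_iff' measurableSet_Ioc).2 <| ae_of_all _ fun s hs => ?_
    · exact (continuous_id.aestronglyMeasurable.mul (aestronglyMeasurable_of_forall_hasDerivAt
        measurableSet_Ioc fun s hs => hu s (Ioc_subset_Icc_self hs))).pow 2
    · rw [Real.norm_of_nonneg (sq_nonneg _)]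
      exact hsq_le s (Ioc_subset_Icc_self hs)
  have hHardy : ∫ s in x..1, u s ^ 2 ≤ 2 * u 1 ^ 2 + 4 * K := by
    have h := integral_sq_le_of_hardy hx.le hx1 hu hsu'
    have hle : ∫ s in x..1, (s * u' s) ^ 2 ≤ K :=
      intervalIntegral.integral_mono_on hx1 hsu' hw hsq_le
    linarith
  have hPoincare : ∫ s in x..1, u s ^ 2 ≤ 2 * u 1 ^ 2 + 2 / (2 - μ) * K := by
    have h : ∫ s in x..1, (u s - u 1) ^ 2 ≤ 1 / (2 - μ) * K :=
      integral_sq_sub_le_of_rpow_weight hx hx1 hμ hu hw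
    have hvint : IntervalIntegrable (fun s => (u s - u 1) ^ 2) volume x 1 :=
      ((hucont.sub continuousOn_const).pow 2).intervalIntegrable_of_Icc hx1
    calc ∫ s in x..1, u s ^ 2 ≤ ∫ s in x..1, (2 * (u s - u 1) ^ 2 + 2 * u 1 ^ 2) :=
          intervalIntegral.integral_mono_on hx1 ((hucont.pow 2).intervalIntegrable_of_Icc hx1)
            ((hvint.const_mul 2).add intervalIntegrable_const)
            fun s _ => by nlinarith [sq_nonneg (u s - 2 * u 1)]
      _ = 2 * (∫ s in x..1, (u s - u 1) ^ 2) + (1 - x) * (2 * u 1 ^ 2) := by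
          rw [intervalIntegral.integral_add (hvint.const_mul 2) intervalIntegrable_const,
            intervalIntegral.integral_const_mul, intervalIntegral.integral_const, smul_eq_mul]
      _ ≤ 2 * u 1 ^ 2 + 2 / (2 - μ) * K := by
          have : 2 * (1 / (2 - μ) * K) = 2 / (2 - μ) * K := by ring
          nlinarith [sq_nonneg (u 1)]
  rw [min_mul_of_nonneg _ _ hK, ← min_add_add_left]
  exact le_min hHardy hPoincare

theorem antitoneOn_mul_rpow_neg_s13 {a a' : ℝ → ℝ} {μ b : ℝ}
    (ha : ∀ x ∈ Ioc 0 b, HasDerivAt a (a' x) x) (h : ∀ x ∈ Ioc 0 b, x * a' x ≤ μ * a x) :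
    AntitoneOn (fun x => a x * x ^ (-μ)) (Ioc 0 b) := by
  have hderiv : ∀ x ∈ Ioc 0 b, HasDerivAt (fun x => a x * x ^ (-μ))
      (a' x * x ^ (-μ) + a x * (-μ * x ^ (-μ - 1))) x := fun x hx =>
    (ha x hx).mul (Real.hasDerivAt_rpow_const (Or.inl hx.1.ne'))
  refine antitoneOn_of_hasDerivWithinAt_nonpos (convex_Ioc 0 b)
    (fun x hx => (hderiv x hx).continuousAt.continuousWithinAt)
    (fun x hx => (hderiv x (interior_subset hx)).hasDerivWithinAt) fun x hx => ?_
  have hx := interior_subset hx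
  have hx0 : 0 < x := hx.1
  have hp := Real.rpow_pos_of_pos hx0 (-μ)
  have heq : a' x * x ^ (-μ) + a x * (-μ * x ^ (-μ - 1)) = x ^ (-μ) / x * (x * a' x - μ * a x) := by
    rw [Real.rpow_sub_one hx0.ne']
    field_simp
    ring
  rw [heq]
  exact mul_nonpos_of_nonneg_of_nonpos (by positivity) (by linarith [h x hx])

theorem intervalIntegrable_rpow_mul_sq_and_integral_le {a u' : ℝ → ℝ} {x μ c : ℝ} (hx : 0 < x)
    (hx1 : x ≤ 1) (hc : 0 < c) (hweight : ∀ s ∈ Ioc (0 : ℝ) 1, c * s ^ μ ≤ a s)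
    (hu' : AEStronglyMeasurable u' (volume.restrict (Ioc x 1)))
    (ha : IntegrableOn (fun s => a s * u' s ^ 2) (Ioc 0 1)) :
    IntervalIntegrable (fun s => s ^ μ * u' s ^ 2) volume x 1 ∧
      ∫ s in x..1, s ^ μ * u' s ^ 2 ≤ (∫ s in Ioc 0 1, a s * u' s ^ 2) / c := by
  have hsub : Ioc x 1 ⊆ Ioc 0 1 := Ioc_subset_Ioc_left hx.le
  have hrpow : ∀ s ∈ Ioc (0 : ℝ) 1, 0 < s ^ μ := fun s hs => Real.rpow_pos_of_pos hs.1 μ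
  have hdom : ∀ᵐ s ∂volume.restrict (Ioc x 1), ‖s ^ μ * u' s ^ 2‖ ≤ a s * u' s ^ 2 / c :=
    (ae_restrict_iff' measurableSet_Ioc).2 <| ae_of_all _ fun s hs => by
      rw [Real.norm_of_nonneg (mul_nonneg (hrpow s (hsub hs)).le (sq_nonneg _)),
        mul_div_right_comm]
      exact mul_le_mul_of_nonneg_right ((le_div_iff₀' hc).2 (hweight s (hsub hs))) (sq_nonneg _)
  have hac : IntegrableOn (fun s => a s * u' s ^ 2 / c) (Ioc 0 1) := ha.div_const c
  have hw : IntegrableOn (fun s => s ^ μ * u' s ^ 2) (Ioc x 1) :=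
    (hac.mono_set hsub).mono'
      ((measurable_id.pow_const μ).aestronglyMeasurable.mul (hu'.pow 2)) hdom
  refine ⟨(intervalIntegrable_iff_integrableOn_Ioc_of_le hx1).2 hw, ?_⟩
  rw [intervalIntegral.integral_of_le hx1, ← integral_div]
  refine (integral_mono_ae hw (hac.mono_set hsub)
    (hdom.mono fun s hs => (Real.le_norm_self _).trans hs)).trans ?_
  refine setIntegral_mono_set hac ?_ hsub.eventuallyLE
  exact (ae_restrict_iff' measurableSet_Ioc).2 <| ae_of_all _ fun s hs =>
    div_nonneg (mul_nonneg ((mul_pos hc (hrpow s hs)).le.trans (hweight s hs)) (sq_nonneg _)) hc.le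

theorem integral_Ioo_le_of_forall_integral_le {f : ℝ → ℝ} {a b C : ℝ} (hab : a < b)
    (hf : IntegrableOn f (Ioo a b)) (h : ∀ x ∈ Ioo a b, ∫ s in x..b, f s ≤ C) :
    ∫ s in Ioo a b, f s ≤ C := by
  have hf' : IntegrableOn f (uIcc a b) := by
    rw [uIcc_of_le hab.le]; exact (integrableOn_Icc_iff_integrableOn_Ioo (a := a) (b := b)).2 hf
  have hcont := intervalIntegral.continuousOn_primitive_interval_left (μ := volume) hf'
  rw [uIcc_of_le hab.le] at hcont
  have hF := ContinuousWithinAt.closure_le (closure_Ioo hab.ne ▸ left_mem_Icc.2 hab.le)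
    ((hcont a (left_mem_Icc.2 hab.le)).mono Ioo_subset_Icc_self) continuousWithinAt_const h
  rwa [intervalIntegral.integral_of_le hab.le, integral_Ioc_eq_integral_Ioo] at hF

theorem poincare_without_boundary_condition_general
    (a ad : ℝ → ℝ) (μ : ℝ)
    (hderiv : ∀ x ∈ Set.Ioc (0:ℝ) 1, HasDerivAt a (ad x) x)
    (hpos : ∀ x ∈ Set.Ioc (0:ℝ) 1, 0 < a x)
    (hμ2 : μ < 2)
    (hμ : ∀ x ∈ Set.Ioc (0:ℝ) 1, x * |ad x| ≤ μ * a x)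
    (u ud : ℝ → ℝ)
    (hu2 : MeasureTheory.IntegrableOn (fun x => (u x) ^ 2) (Set.Ioo 0 1))
    (huderiv : ∀ x ∈ Set.Ioc (0:ℝ) 1, HasDerivAt u (ud x) x)
    (hud2 : MeasureTheory.IntegrableOn (fun x => a x * (ud x) ^ 2) (Set.Ioo 0 1)) :
    ∫ x in Set.Ioo (0:ℝ) 1, (u x) ^ 2
      ≤ 2 * (u 1) ^ 2 + ((1 / a 1) * min 4 (2 / (2 - μ)))
          * ∫ x in Set.Ioo (0:ℝ) 1, a x * (ud x) ^ 2 := by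
  have hweight : ∀ s ∈ Ioc (0 : ℝ) 1, a 1 * s ^ μ ≤ a s := by
    intro s hs
    have h := antitoneOn_mul_rpow_neg_s13 hderiv (fun x hx => (mul_le_mul_of_nonneg_left
      (le_abs_self _) hx.1.le).trans (hμ x hx)) hs ⟨one_pos, le_rfl⟩ hs.2
    dsimp only at h
    rwa [Real.one_rpow, mul_one, Real.rpow_neg hs.1.le, ← div_eq_mul_inv,
      le_div_iff₀ (Real.rpow_pos_of_pos hs.1 μ)] at h
  refine integral_Ioo_le_of_forall_integral_le one_pos hu2 fun x hx => ?_
  have hu : ∀ s ∈ Icc x 1, HasDerivAt u (ud s) s :=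
    fun s hs => huderiv s ⟨hx.1.trans_le hs.1, hs.2⟩
  obtain ⟨hw, hK⟩ := intervalIntegrable_rpow_mul_sq_and_integral_le hx.1 hx.2.le
    (hpos 1 ⟨one_pos, le_rfl⟩) hweight (aestronglyMeasurable_of_forall_hasDerivAt
      measurableSet_Ioc fun s hs => hu s (Ioc_subset_Icc_self hs))
    ((integrableOn_Ioc_iff_integrableOn_Ioo (a := 0) (b := 1)).2 hud2)
  rw [integral_Ioc_eq_integral_Ioo] at hK
  calc ∫ s in x..1, u s ^ 2
      ≤ 2 * u 1 ^ 2 + min 4 (2 / (2 - μ)) * ∫ s in x..1, s ^ μ * ud s ^ 2 :=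
        integral_sq_le_of_rpow_weight hx.1 hx.2.le hμ2 hu hw
    _ ≤ 2 * u 1 ^ 2 + min 4 (2 / (2 - μ)) * ((∫ s in Ioo 0 1, a s * ud s ^ 2) / a 1) := by
        gcongr
    _ = _ := by ring

theorem poincare_without_boundary_condition
    (a ad : ℝ → ℝ) (μ : ℝ)
    (hcont : ContinuousOn a (Set.Icc 0 1))
    (hderiv : ∀ x ∈ Set.Ioc (0:ℝ) 1, HasDerivAt a (ad x) x)
    (hpos : ∀ x ∈ Set.Ioc (0:ℝ) 1, 0 < a x)
    (ha0 : a 0 = 0)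
    (hμ0 : 0 ≤ μ) (hμ2 : μ < 2)
    (hμ : ∀ x ∈ Set.Ioc (0:ℝ) 1, x * |ad x| ≤ μ * a x)
    (u ud : ℝ → ℝ)
    (hu2 : MeasureTheory.IntegrableOn (fun x => (u x) ^ 2) (Set.Ioo 0 1))
    (huderiv : ∀ x ∈ Set.Ioc (0:ℝ) 1, HasDerivAt u (ud x) x)
    (hud2 : MeasureTheory.IntegrableOn (fun x => a x * (ud x) ^ 2) (Set.Ioo 0 1)) :
    ∫ x in Set.Ioo (0:ℝ) 1, (u x) ^ 2
      ≤ 2 * (u 1) ^ 2 + ((1 / a 1) * min 4 (2 / (2 - μ)))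
          * ∫ x in Set.Ioo (0:ℝ) 1, a x * (ud x) ^ 2 :=
  poincare_without_boundary_condition_general a ad μ hderiv hpos hμ2 hμ u ud hu2 huderiv hud2
end
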